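/- (Hayashi's pinching inequality) Let ρ be a density matrix on a finite-dimensional Hilbert space and let P(ρ) = Σ_{j=1}^J Π_j ρ Π_j be the pinching with respect to orthogonal projectors {Π_j} summing to the identity. Then P(ρ) ≥ ρ/J in the positive semidefinite order. -/

import Mathlib

open Matrix
open scoped ComplexOrder

/-!
With `t = 1/J` and `∑ⱼ Πⱼ = 1`, expanding the square gives the variance identity
`P(ρ) - t ρ = ∑ⱼ (Πⱼ - t) ρ (Πⱼ - t)`.
Each summand is a congruence of `ρ` by a Hermitian matrix, hence positive semidefinite.
-/

def pinching {κ R : Type*} [Fintype κ] [Ring R] (P : κ → R) (x : R) : R :=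
  ∑ j, P j * x * P j

theorem pinching_sub_inv_card_smul_eq_sum {κ 𝕜 R : Type*} [Fintype κ] [Field 𝕜] [Ring R]
    [Algebra 𝕜 R] {P : κ → R} (hP : ∑ j, P j = 1) (hκ : (Fintype.card κ : 𝕜) ≠ 0) (x : R) :
    pinching P x - (Fintype.card κ : 𝕜)⁻¹ • x =
      ∑ j, (P j - (Fintype.card κ : 𝕜)⁻¹ • 1) * x * (P j - (Fintype.card κ : 𝕜)⁻¹ • 1) := by
  set t := (Fintype.card κ : 𝕜)⁻¹
  have hexpand : ∀ j, (P j - t • 1) * x * (P j - t • 1) =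
      P j * x * P j - t • (P j * x) - t • (x * P j) + (t * t) • x := by
    intro j
    simp only [sub_mul, mul_sub, smul_mul_assoc, mul_smul_comm, one_mul, mul_one]
    module
  simp only [hexpand, Finset.sum_add_distrib, Finset.sum_sub_distrib, ← Finset.smul_sum,
    ← Finset.mul_sum, ← Finset.sum_mul, hP, one_mul, mul_one, Finset.sum_const, Finset.card_univ]
  have hcancel : (t * t) • Fintype.card κ • x = t • x := by
    rw [← Nat.cast_smul_eq_nsmul 𝕜, smul_smul, mul_assoc, inv_mul_cancel₀ hκ, mul_one]
  rw [pinching, hcancel]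
  abel

theorem Matrix.PosSemidef.pinching_sub_inv_card_smul {κ n 𝕜 : Type*} [Fintype κ] [Nonempty κ]
    [Fintype n] [DecidableEq n] [RCLike 𝕜] {P : κ → Matrix n n 𝕜} (hP : ∀ j, (P j).IsHermitian)
    (hsum : ∑ j, P j = 1) {ρ : Matrix n n 𝕜} (hρ : ρ.PosSemidef) :
    (pinching P ρ - (Fintype.card κ : 𝕜)⁻¹ • ρ).PosSemidef := by
  rw [pinching_sub_inv_card_smul_eq_sum hsum (by simp)]
  refine posSemidef_sum _ fun j _ => ?_
  have hherm : (P j - (Fintype.card κ : 𝕜)⁻¹ • 1).IsHermitian :=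
    (hP j).sub (isHermitian_one.smul (by simp [IsSelfAdjoint]))
  have hcongr := hρ.mul_mul_conjTranspose_same (P j - (Fintype.card κ : 𝕜)⁻¹ • 1)
  rwa [hherm.eq] at hcongr

theorem pinching_inequality_general
    {ι : Type*} [Fintype ι] [DecidableEq ι] (J : ℕ) (hJ : 0 < J)
    (P : Fin J → Matrix ι ι ℂ)
    (hproj : ∀ j, (P j)ᴴ = P j ∧ P j * P j = P j)
    (hsum : ∑ j, P j = 1)
    (ρ : Matrix ι ι ℂ) (hρ : ρ.PosSemidef) :
    ((∑ j, P j * ρ * P j) - ((J : ℂ))⁻¹ • ρ).PosSemidef := by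
  have : Nonempty (Fin J) := ⟨⟨0, hJ⟩⟩
  simpa [pinching] using hρ.pinching_sub_inv_card_smul (fun j => (hproj j).1) hsum

/-- Hayashi's pinching inequality: for a density matrix `ρ` and a pinching
with respect to `J` mutually orthogonal projectors summing to the identity,
`P(ρ) ≥ ρ / J` in the Loewner order. -/
theorem pinching_inequality
    {ι : Type*} [Fintype ι] [DecidableEq ι] (J : ℕ) (hJ : 0 < J)
    (P : Fin J → Matrix ι ι ℂ)
    (hproj : ∀ j, (P j)ᴴ = P j ∧ P j * P j = P j)
    (horth : ∀ j j', j ≠ j' → P j * P j' = 0)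
    (hsum : ∑ j, P j = 1)
    (ρ : Matrix ι ι ℂ) (hρ : ρ.PosSemidef) (hρ1 : ρ.trace = 1) :
    ((∑ j, P j * ρ * P j) - ((J : ℂ))⁻¹ • ρ).PosSemidef :=
  pinching_inequality_general J hJ P hproj hsum ρ hρ
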